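/- For every x ∈ ℚ₂, exactly one of the following three alternatives holds: (a) f^[n](x) ∈ 4ℤ₂ ∪ (1 + 4ℤ₂) for all n ≥ 0; (b) |f^[n](x)|₂ → ∞ as n → ∞; (c) there exists n ≥ 0 with f^[n](x) ∈ 1 + 2 + 4ℤ₂. (Thus the Fatou set of f in ℚ₂ is the union of the iterated preimages of the basin of ∞ and of the Fatou component 1 + 2 + 4ℤ₂ of the fixed point 1/3.) -/

import Mathlib

open Function Set Filter

/-- The cubic polynomial `f(x) = (9/4)·x·(x−1)²` acting on `ℚ₂`. -/
noncomputable def f : ℚ_[2] → ℚ_[2] := fun x => (9 / 4 : ℚ_[2]) * x * (x - 1) ^ 2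

/-- (a): the entire forward orbit of `x` stays in `4ℤ₂ ∪ (1 + 4ℤ₂)`. -/
def staysIn (x : ℚ_[2]) : Prop :=
  ∀ n : ℕ, f^[n] x ∈
    {y : ℚ_[2] | ‖y‖ ≤ (1 / 2 : ℝ) ^ 2} ∪ {y : ℚ_[2] | ‖y - 1‖ ≤ (1 / 2 : ℝ) ^ 2}

/-- (b): the orbit of `x` escapes to `∞`, i.e. `|fⁿ(x)|₂ → ∞`. -/
def escapes (x : ℚ_[2]) : Prop :=
  Tendsto (fun n : ℕ => ‖f^[n] x‖) atTop atTop

/-- (c): some iterate of `x` lands in the disk `1 + 2 + 4ℤ₂`. -/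
def hitsBasin (x : ℚ_[2]) : Prop :=
  ∃ n : ℕ, ‖f^[n] x - (1 + 2)‖ ≤ (1 / 2 : ℝ) ^ 2

lemma norm2 : ‖(2 : ℚ_[2])‖ = 1/2 := by
  have h := @Padic.norm_p 2 _
  push_cast at h
  rw [h]; norm_num

lemma norm4 : ‖(4 : ℚ_[2])‖ = 1/4 := by
  have : (4:ℚ_[2]) = 2^2 := by norm_num
  rw [this, norm_pow, norm2]; norm_num

lemma norm_add_eq_left {a b : ℚ_[2]} (h : ‖b‖ < ‖a‖) : ‖a + b‖ = ‖a‖ := by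
  rw [Padic.add_eq_max_of_ne h.ne', max_eq_left h.le]

lemma norm9 : ‖(9 : ℚ_[2])‖ = 1 := by
  have h8 : ‖(2:ℚ_[2])^3‖ = 1/8 := by rw [norm_pow, norm2]; norm_num
  have : (9:ℚ_[2]) = 1 + 2^3 := by norm_num
  rw [this, norm_add_eq_left (by rw [h8, norm_one]; norm_num), norm_one]

lemma norm3 : ‖(3 : ℚ_[2])‖ = 1 := by
  have : (3:ℚ_[2]) = 1 + 2 := by norm_num
  rw [this, norm_add_eq_left (by rw [norm2, norm_one]; norm_num), norm_one]

lemma norm94 : ‖(9/4 : ℚ_[2])‖ = 4 := by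
  rw [norm_div, norm9, norm4]; norm_num

-- escape step

lemma fnorm_big {y : ℚ_[2]} (h : 2 ≤ ‖y‖) : ‖f y‖ = 4 * ‖y‖^3 := by
  have h1 : ‖y - 1‖ = ‖y‖ := by
    have : y - 1 = y + (-1) := by ring
    rw [this, norm_add_eq_left (by rw [norm_neg, norm_one]; linarith)]
  show ‖(9 / 4 : ℚ_[2]) * y * (y - 1) ^ 2‖ = 4 * ‖y‖^3
  rw [norm_mul, norm_mul, norm94, norm_pow, h1]; ring

lemma two_le_of_one_lt {y : ℚ_[2]} (h : 1 < ‖y‖) : 2 ≤ ‖y‖ := by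
  have hy : y ≠ 0 := by
    intro h0; rw [h0, norm_zero] at h; linarith
  rw [Padic.norm_eq_zpow_neg_valuation hy] at h ⊢
  have h2 : (1:ℝ) < (2:ℕ) := by norm_num
  have hv : 0 < -y.valuation := by
    by_contra hc
    push_neg at hc
    have := zpow_le_one_of_nonpos₀ (le_of_lt h2) hc
    linarith
  have h1 : (1:ℤ) ≤ -y.valuation := hv
  calc (2:ℝ) = ((2:ℕ):ℝ)^(1:ℤ) := by norm_num
  _ ≤ ((2:ℕ):ℝ)^(-y.valuation) := by
      apply zpow_le_zpow_right₀ (by norm_num) h1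

lemma escapes_of_two_le {x : ℚ_[2]} {m : ℕ} (h : 2 ≤ ‖f^[m] x‖) : escapes x := by
  have key : ∀ k : ℕ, (2:ℝ)^(k+1) ≤ ‖f^[m+k] x‖ := by
    intro k
    induction k with
    | zero => simpa using h
    | succ k ih =>
      have h2 : (2:ℝ) ≤ ‖f^[m+k] x‖ := by
        refine le_trans ?_ ih
        calc (2:ℝ) = 2^1 := (pow_one 2).symm
        _ ≤ 2^(k+1) := by apply pow_le_pow_right₀ (by norm_num) (by omega)
      have hb := fnorm_big h2
      have : m + (k+1) = (m+k) + 1 := by ring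
      rw [this, Function.iterate_succ_apply', hb]
      have hnn : (0:ℝ) ≤ ‖f^[m+k] x‖ := norm_nonneg _
      calc (2:ℝ)^(k+1+1) = 2 * 2^(k+1) := by ring
      _ ≤ 2 * ‖f^[m+k] x‖ := by linarith
      _ ≤ 4 * ‖f^[m+k] x‖^3 := by
            have hsq : 4 ≤ ‖f^[m+k] x‖^2 := by nlinarith
            nlinarith
  have hmono : (fun n : ℕ => (n:ℝ) - m) ≤ᶠ[atTop] fun n => ‖f^[n] x‖ := by
    filter_upwards [eventually_ge_atTop m] with n hn
    have hk := key (n - m)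
    rw [Nat.add_sub_cancel' hn] at hk
    have h2 : ((n - m : ℕ):ℝ) + 1 ≤ 2^((n-m)+1) := by
      have := Nat.lt_two_pow_self (n := (n - m) + 1)
      calc ((n - m : ℕ):ℝ) + 1 = (((n-m)+1 : ℕ):ℝ) := by push_cast; ring
      _ ≤ ((2^((n-m)+1) : ℕ):ℝ) := by exact_mod_cast this.le
      _ = 2^((n-m)+1) := by push_cast; ring
    have h3 : (n:ℝ) - m ≤ ((n - m : ℕ):ℝ) + 1 := by
      rw [Nat.cast_sub hn]; linarith
    linarith
  have ht : Tendsto (fun n : ℕ => (n:ℝ) - m) atTop atTop := by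
    simpa [sub_eq_add_neg] using
      tendsto_atTop_add_const_right atTop (-(m:ℝ)) (tendsto_natCast_atTop_atTop (R := ℝ))
  exact tendsto_atTop_mono' _ hmono ht

lemma mod2Z (z : ℤ_[2]) : (2:ℤ_[2]) ∣ z ∨ (2:ℤ_[2]) ∣ (z - 1) := by
  obtain ⟨n, hn, hm⟩ := PadicInt.exists_mem_range (p := 2) (x := z)
  rw [PadicInt.maximalIdeal_eq_span_p, Ideal.mem_span_singleton] at hm
  interval_cases n
  · left; simpa using hm
  · right; simpa using hm

lemma mod4Z (z : ℤ_[2]) :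
    (4:ℤ_[2]) ∣ z ∨ (4:ℤ_[2]) ∣ (z-1) ∨ (4:ℤ_[2]) ∣ (z-2) ∨ (4:ℤ_[2]) ∣ (z-3) := by
  rcases mod2Z z with ⟨w, hw⟩ | ⟨w, hw⟩
  · rcases mod2Z w with ⟨v, hv⟩ | ⟨v, hv⟩
    · exact Or.inl ⟨v, by linear_combination hw + 2*hv⟩
    · exact Or.inr (Or.inr (Or.inl ⟨v, by linear_combination hw + 2*hv⟩))
  · rcases mod2Z w with ⟨v, hv⟩ | ⟨v, hv⟩
    · exact Or.inr (Or.inl ⟨v, by linear_combination hw + 2*hv⟩)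
    · exact Or.inr (Or.inr (Or.inr ⟨v, by linear_combination hw + 2*hv⟩))

lemma norm_le_quarter_of_four_dvd {z : ℤ_[2]} (h : (4:ℤ_[2]) ∣ z) :
    ‖(z : ℚ_[2])‖ ≤ 1/4 := by
  obtain ⟨c, rfl⟩ := h
  have hc : ‖((c : ℤ_[2]) : ℚ_[2])‖ ≤ 1 := c.2
  have h4 : ((4:ℤ_[2]) : ℚ_[2]) = 4 := by norm_cast
  rw [PadicInt.coe_mul, h4, norm_mul, norm4]
  nlinarith [norm_nonneg ((c : ℤ_[2]) : ℚ_[2])]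

lemma classify {y : ℚ_[2]} (h : ‖y‖ ≤ 1) :
    ‖y‖ ≤ 1/4 ∨ ‖y - 1‖ ≤ 1/4 ∨ ‖y - 2‖ ≤ 1/4 ∨ ‖y - 3‖ ≤ 1/4 := by
  set z : ℤ_[2] := ⟨y, h⟩ with hz
  have h0 : (z : ℚ_[2]) = y := rfl
  rcases mod4Z z with hd|hd|hd|hd
  · left
    rw [← h0]; exact norm_le_quarter_of_four_dvd hd
  · right; left
    have := norm_le_quarter_of_four_dvd hd
    push_cast at this; exact this
  · right; right; left
    have := norm_le_quarter_of_four_dvd hd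
    push_cast at this
    norm_num at this ⊢
    exact this
  · right; right; right
    have := norm_le_quarter_of_four_dvd hd
    push_cast at this
    norm_num at this ⊢
    exact this

lemma f_two_disk {y : ℚ_[2]} (h : ‖y - 2‖ ≤ 1/4) : ‖f y‖ = 2 := by
  have hy : ‖y‖ = 1/2 := by
    have he : y = 2 + (y - 2) := by ring
    rw [he, norm_add_eq_left (by rw [norm2]; linarith), norm2]
  have hy1 : ‖y - 1‖ = 1 := by
    have he : y - 1 = 1 + (y - 2) := by ring
    rw [he, norm_add_eq_left (by rw [norm_one]; linarith), norm_one]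
  show ‖(9 / 4 : ℚ_[2]) * y * (y - 1) ^ 2‖ = 2
  rw [norm_mul, norm_mul, norm94, norm_pow, hy, hy1]; norm_num

lemma normint_le_one' (n : ℤ) : ‖((n : ℤ) : ℚ_[2])‖ ≤ 1 := Padic.norm_int_le_one n

lemma f_three_disk {y : ℚ_[2]} (h : ‖y - 3‖ ≤ 1/4) : ‖f y - 3‖ ≤ 1/4 := by
  have hs0 : (0:ℝ) ≤ ‖y - 3‖ := norm_nonneg _
  have key : f y - 3 = 24 + (36*(y-3) + ((63/4)*(y-3)^2 + (9/4)*(y-3)^3)) := by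
    show (9 / 4 : ℚ_[2]) * y * (y - 1) ^ 2 - 3 = _
    ring
  have h24 : ‖(24:ℚ_[2])‖ ≤ 1/8 := by
    have : (24:ℚ_[2]) = 2^3 * ((3:ℤ) : ℚ_[2]) := by norm_num
    rw [this, norm_mul, norm_pow, norm2]
    calc (1/2:ℝ)^3 * ‖((3:ℤ):ℚ_[2])‖ ≤ (1/2:ℝ)^3 * 1 := by
          gcongr; exact normint_le_one' 3
    _ ≤ 1/8 := by norm_num
  have h36 : ‖(36:ℚ_[2]) * (y-3)‖ ≤ 1/16 := by
    have : (36:ℚ_[2]) = 2^2 * ((9:ℤ) : ℚ_[2]) := by norm_num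
    rw [norm_mul, this, norm_mul, norm_pow, norm2]
    calc (1/2:ℝ)^2 * ‖((9:ℤ):ℚ_[2])‖ * ‖y - 3‖ ≤ (1/2:ℝ)^2 * 1 * (1/4) := by
          gcongr <;> first | exact normint_le_one' 9 | exact h
    _ ≤ 1/16 := by norm_num
  have h63 : ‖(63/4:ℚ_[2]) * (y-3)^2‖ ≤ 1/4 := by
    have : (63/4:ℚ_[2]) = ((63:ℤ) : ℚ_[2]) / 4 := by norm_num
    rw [norm_mul, this, norm_div, norm4, norm_pow]
    calc ‖((63:ℤ):ℚ_[2])‖ / (1/4) * ‖y - 3‖^2 ≤ 1 / (1/4) * (1/4:ℝ)^2 := by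
          gcongr <;> first | exact normint_le_one' 63 | exact h | norm_num
    _ ≤ 1/4 := by norm_num
  have h94' : ‖(9/4:ℚ_[2]) * (y-3)^3‖ ≤ 1/16 := by
    rw [norm_mul, norm94, norm_pow]
    calc 4 * ‖y - 3‖^3 ≤ 4 * (1/4:ℝ)^3 := by gcongr
    _ ≤ 1/16 := by norm_num
  rw [key]
  calc ‖(24:ℚ_[2]) + _‖ ≤ max ‖(24:ℚ_[2])‖ ‖36*(y-3) + ((63/4)*(y-3)^2 + (9/4)*(y-3)^3)‖ :=
        Padic.nonarchimedean _ _
  _ ≤ max ‖(24:ℚ_[2])‖ (max ‖(36:ℚ_[2])*(y-3)‖ ‖(63/4:ℚ_[2])*(y-3)^2 + (9/4)*(y-3)^3‖) := by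
      apply max_le_max le_rfl (Padic.nonarchimedean _ _)
  _ ≤ max ‖(24:ℚ_[2])‖ (max ‖(36:ℚ_[2])*(y-3)‖ (max ‖(63/4:ℚ_[2])*(y-3)^2‖ ‖(9/4:ℚ_[2])*(y-3)^3‖)) := by
      apply max_le_max le_rfl (max_le_max le_rfl (Padic.nonarchimedean _ _))
  _ ≤ 1/4 := by
      apply max_le (by linarith) (max_le (by linarith) (max_le h63 (h94'.trans (by norm_num))))

lemma staysIn_bound {x : ℚ_[2]} (hs : staysIn x) : ∀ n, ‖f^[n] x‖ ≤ 1 := by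
  intro n
  rcases hs n with h|h <;> simp only [mem_setOf_eq] at h <;> norm_num at h
  · linarith
  · calc ‖f^[n] x‖ = ‖(f^[n] x - 1) + 1‖ := by ring_nf
    _ ≤ max ‖f^[n] x - 1‖ ‖(1:ℚ_[2])‖ := Padic.nonarchimedean _ _
    _ ≤ 1 := max_le (by linarith) (by rw [norm_one])

lemma basin_forever {x : ℚ_[2]} {n : ℕ} (h : ‖f^[n] x - 3‖ ≤ 1/4) :
    ∀ k, ‖f^[n+k] x - 3‖ ≤ 1/4 := by
  intro k
  induction k with
  | zero => simpa using h
  | succ k ih =>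
    have : n + (k+1) = (n+k) + 1 := by ring
    rw [this, Function.iterate_succ_apply']
    exact f_three_disk ih

/-- For every `x ∈ ℚ₂` exactly one of the three alternatives holds:
(a) the forward orbit stays in `4ℤ₂ ∪ (1 + 4ℤ₂)`; (b) `|fⁿ(x)|₂ → ∞`;
(c) some iterate lands in `1 + 2 + 4ℤ₂`. -/
theorem stmt15 (x : ℚ_[2]) :
    (staysIn x ∨ escapes x ∨ hitsBasin x) ∧
    ¬(staysIn x ∧ escapes x) ∧ ¬(staysIn x ∧ hitsBasin x) ∧ ¬(escapes x ∧ hitsBasin x) := by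
  refine ⟨?_, ?_, ?_, ?_⟩
  · by_cases hs : staysIn x
    · exact Or.inl hs
    · right
      simp only [staysIn, mem_union, mem_setOf_eq, not_forall] at hs
      obtain ⟨n, hn⟩ := hs
      push_neg at hn
      obtain ⟨hn1, hn2⟩ := hn
      norm_num at hn1 hn2
      by_cases h1 : ‖f^[n] x‖ ≤ 1
      · rcases classify h1 with h|h|h|h
        · linarith
        · linarith
        · left
          apply escapes_of_two_le (m := n+1)
          rw [Function.iterate_succ_apply', f_two_disk h]
        · right
          refine ⟨n, ?_⟩
          norm_num
          exact h
      · left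
        exact escapes_of_two_le (two_le_of_one_lt (lt_of_not_ge h1))
  · rintro ⟨hs, he⟩
    obtain ⟨n, hn⟩ := (he.eventually (eventually_ge_atTop 2)).exists
    linarith [staysIn_bound hs n]
  · rintro ⟨hs, n, hn⟩
    norm_num at hn
    rcases hs n with h|h <;> simp only [mem_setOf_eq] at h <;> norm_num at h
    · have h3 : (3:ℚ_[2]) = f^[n] x + (-(f^[n] x - 3)) := by ring
      have := calc (1:ℝ) = ‖(3:ℚ_[2])‖ := norm3.symm
        _ ≤ max ‖f^[n] x‖ ‖-(f^[n] x - 3)‖ := by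
            rw [show ‖(3:ℚ_[2])‖ = ‖f^[n] x + (-(f^[n] x - 3))‖ from congrArg norm h3]
            exact Padic.nonarchimedean _ _
        _ ≤ 1/4 := by rw [norm_neg]; exact max_le h hn
      linarith
    · have h2 : (2:ℚ_[2]) = (f^[n] x - 1) + (-(f^[n] x - 3)) := by ring
      have := calc (1/2:ℝ) = ‖(2:ℚ_[2])‖ := norm2.symm
        _ ≤ max ‖f^[n] x - 1‖ ‖-(f^[n] x - 3)‖ := by
            rw [show ‖(2:ℚ_[2])‖ = ‖(f^[n] x - 1) + (-(f^[n] x - 3))‖ from congrArg norm h2]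
            exact Padic.nonarchimedean _ _
        _ ≤ 1/4 := by rw [norm_neg]; exact max_le h hn
      linarith
  · rintro ⟨he, n, hn⟩
    norm_num at hn
    have hall := basin_forever hn
    have hb : ∀ k, ‖f^[n+k] x‖ ≤ 1 := by
      intro k
      calc ‖f^[n+k] x‖ = ‖(f^[n+k] x - 3) + 3‖ := by ring_nf
      _ ≤ max ‖f^[n+k] x - 3‖ ‖(3:ℚ_[2])‖ := Padic.nonarchimedean (f^[n+k] x - 3) 3
      _ ≤ 1 := max_le (by linarith [hall k]) (le_of_eq norm3)
    obtain ⟨N, hN2, hNn⟩ := ((he.eventually (eventually_ge_atTop 2)).and (eventually_ge_atTop n)).exists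
    have := hb (N - n)
    rw [Nat.add_sub_cancel' hNn] at this
    linarith
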